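/- arXiv:2405.07375 — 6 statements merged into one kernel-verified Lean document; each statement's English description precedes it below -/
import Mathlib

section
/- Ř ∘ Ř' = Ř' ∘ Ř = id_{V⊗V}; in particular the R-matrix Ř of the vector representation of U_q(gl(m|n)) is invertible with inverse Ř'. (Invariance of the virtual U_q(gl(m|n)) functor under the Reidemeister 2 move.) -/
/-!
STATEMENT 1: Ř ∘ Ř' = Ř' ∘ Ř = id_{V⊗V}; in particular the R-matrix Ř of the vector
representation of U_q(gl(m|n)) is invertible with inverse Ř' (Reidemeister 2 invariance).
Endomorphisms of V ⊗ V are represented by their matrices in the basis of pure tensors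
(rows = outputs, columns = inputs); composition is matrix multiplication.
-/

noncomputable section

/-- The field `ℂ(q)` of rational functions in one variable over `ℂ`. -/
abbrev Kq : Type := RatFunc ℂ

/-- The variable `q ∈ ℂ(q)`. -/
def q : Kq := RatFunc.X

/-- The sign `(−1)^{|i||j|}`, where `|i| = 0` for the first `m` basis vectors and `|i| = 1`
for the last `n` (0-based indexing: the paper's `i ≤ m` becomes `(i : ℕ) < m`). -/
def sgn (m n : ℕ) (i j : Fin (m + n)) : Kq :=
  if m ≤ (i : ℕ) ∧ m ≤ (j : ℕ) then -1 else 1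

/-- The R-matrix `Ř` of the vector representation of `U_q(gl(m|n))` on `V ⊗ V`
(rows = output indices, columns = input indices):
`Ř(x_i ⊗ x_j) = q·x_i ⊗ x_i` if `i = j ≤ m`;
`= (−1)^{|i||j|} x_j ⊗ x_i + (q − q⁻¹) x_i ⊗ x_j` if `i < j`;
`= (−1)^{|i||j|} x_j ⊗ x_i` if `i > j`; `= −q⁻¹·x_i ⊗ x_i` if `i = j > m`. -/
def Rhat (m n : ℕ) :
    Matrix (Fin (m + n) × Fin (m + n)) (Fin (m + n) × Fin (m + n)) Kq :=
  fun a x =>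
    if x.1 = x.2 then
      if a = x then (if (x.1 : ℕ) < m then q else -q⁻¹) else 0
    else if (x.1 : ℕ) < (x.2 : ℕ) then
      (if a = (x.2, x.1) then sgn m n x.1 x.2 else 0) +
        (if a = x then q - q⁻¹ else 0)
    else
      if a = (x.2, x.1) then sgn m n x.1 x.2 else 0

/-- The inverse R-matrix `Ř'` of the vector representation of `U_q(gl(m|n))` on `V ⊗ V`:
`Ř'(x_i ⊗ x_j) = q⁻¹·x_i ⊗ x_i` if `i = j ≤ m`;
`= (−1)^{|i||j|} x_j ⊗ x_i` if `i < j`;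
`= (−1)^{|i||j|} x_j ⊗ x_i + (q⁻¹ − q) x_i ⊗ x_j` if `i > j`;
`= −q·x_i ⊗ x_i` if `i = j > m`. -/
def Rhat' (m n : ℕ) :
    Matrix (Fin (m + n) × Fin (m + n)) (Fin (m + n) × Fin (m + n)) Kq :=
  fun a x =>
    if x.1 = x.2 then
      if a = x then (if (x.1 : ℕ) < m then q⁻¹ else -q) else 0
    else if (x.1 : ℕ) < (x.2 : ℕ) then
      if a = (x.2, x.1) then sgn m n x.1 x.2 else 0
    else
      (if a = (x.2, x.1) then sgn m n x.1 x.2 else 0) +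
        (if a = x then q⁻¹ - q else 0)

lemma q_ne : (q : Kq) ≠ 0 := RatFunc.X_ne_zero

lemma sgn_mul (m n : ℕ) (i j : Fin (m+n)) : sgn m n i j * sgn m n j i = 1 := by
  unfold sgn
  by_cases h1 : m ≤ (i : ℕ) <;> by_cases h2 : m ≤ (j : ℕ) <;>
    norm_num [h1, h2]

theorem key1 (m n : ℕ) : Rhat m n * Rhat' m n = 1 := by
  ext a x
  rw [Matrix.mul_apply, Matrix.one_apply]
  rcases x with ⟨i, j⟩
  rcases lt_trichotomy (i : ℕ) (j : ℕ) with h | h | h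
  · have hij : i ≠ j := Fin.ne_of_val_ne h.ne
    have hcol : ∀ b, Rhat' m n b (i, j) = if b = (j, i) then sgn m n i j else 0 := by
      intro b; simp [Rhat', hij, h]
    simp only [hcol, mul_ite, mul_zero, Finset.sum_ite_eq' Finset.univ, Finset.mem_univ,
      if_true]
    have hji : j ≠ i := hij.symm
    have h' : ¬ ((j : ℕ) < (i : ℕ)) := by omega
    simp only [Rhat, hji, h', if_neg, if_false, ite_mul, zero_mul]
    rcases eq_or_ne a (i, j) with rfl | ha
    · simp [sgn_mul m n j i]
    · simp [ha]
  · have hij : i = j := Fin.ext h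
    subst hij
    have hcol : ∀ b, Rhat' m n b (i, i) =
        if b = (i, i) then (if (i : ℕ) < m then q⁻¹ else -q) else 0 := by
      intro b; simp [Rhat']
    simp only [hcol, mul_ite, mul_zero, Finset.sum_ite_eq' Finset.univ, Finset.mem_univ,
      if_true]
    simp only [Rhat, if_pos rfl, ite_mul, zero_mul]
    rcases eq_or_ne a (i, i) with rfl | ha
    · simp only [if_pos rfl]
      split_ifs <;>
        simp [mul_inv_cancel₀ q_ne, neg_mul_neg, inv_mul_cancel₀ q_ne]
    · simp [ha]
  · have hij : i ≠ j := Fin.ne_of_val_ne (by omega)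
    have h' : ¬ ((i : ℕ) < (j : ℕ)) := by omega
    have hltf : ¬ i < j := by rw [Fin.lt_def]; omega
    have hcol : ∀ b, Rhat' m n b (i, j) =
        (if b = (j, i) then sgn m n i j else 0) + (if b = (i, j) then q⁻¹ - q else 0) := by
      intro b; simp [Rhat', hij, h']
    simp only [hcol, mul_add, mul_ite, mul_zero, Finset.sum_add_distrib,
      Finset.sum_ite_eq' Finset.univ, Finset.mem_univ, if_true]
    have hji : j ≠ i := hij.symm
    have hij2 : (j : ℕ) < (i : ℕ) := h
    simp only [Rhat, hji, hij, hij2, if_neg, if_false, if_pos, ite_mul, zero_mul,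
      add_mul]
    have hne : (i, j) ≠ ((j, i) : Fin (m+n) × Fin (m+n)) := by
      simp [Prod.ext_iff]; tauto
    rcases eq_or_ne a (i, j) with rfl | ha
    · simp [hne, hltf, sgn_mul m n j i]
    · rcases eq_or_ne a (j, i) with rfl | ha'
      · simp [hne.symm, ha, hltf]
        ring
      · simp [ha, ha', hltf]

theorem key2 (m n : ℕ) : Rhat' m n * Rhat m n = 1 := by
  ext a x
  rw [Matrix.mul_apply, Matrix.one_apply]
  rcases x with ⟨i, j⟩
  rcases lt_trichotomy (i : ℕ) (j : ℕ) with h | h | h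
  · have hij : i ≠ j := Fin.ne_of_val_ne h.ne
    have hltf : ¬ j < i := by rw [Fin.lt_def]; omega
    have hcol : ∀ b, Rhat m n b (i, j) =
        (if b = (j, i) then sgn m n i j else 0) + (if b = (i, j) then q - q⁻¹ else 0) := by
      intro b; simp [Rhat, hij, h]
    simp only [hcol, mul_add, mul_ite, mul_zero, Finset.sum_add_distrib,
      Finset.sum_ite_eq' Finset.univ, Finset.mem_univ, if_true]
    have hji : j ≠ i := hij.symm
    have h' : ¬ ((j : ℕ) < (i : ℕ)) := by omega
    simp only [Rhat', hji, hij, h', h, if_neg, if_false, if_pos, ite_mul, zero_mul,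
      add_mul]
    have hne : (i, j) ≠ ((j, i) : Fin (m+n) × Fin (m+n)) := by
      simp [Prod.ext_iff]; tauto
    rcases eq_or_ne a (i, j) with rfl | ha
    · simp [hne, hltf, sgn_mul m n j i]
    · rcases eq_or_ne a (j, i) with rfl | ha'
      · simp [hne.symm, ha, hltf]
        ring
      · simp [ha, ha', hltf]
  · have hij : i = j := Fin.ext h
    subst hij
    have hcol : ∀ b, Rhat m n b (i, i) =
        if b = (i, i) then (if (i : ℕ) < m then q else -q⁻¹) else 0 := by
      intro b; simp [Rhat]
    simp only [hcol, mul_ite, mul_zero, Finset.sum_ite_eq' Finset.univ, Finset.mem_univ,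
      if_true]
    simp only [Rhat', if_pos rfl, ite_mul, zero_mul]
    rcases eq_or_ne a (i, i) with rfl | ha
    · simp only [if_pos rfl]
      split_ifs <;>
        simp [mul_inv_cancel₀ q_ne, neg_mul_neg, inv_mul_cancel₀ q_ne]
    · simp [ha]
  · have hij : i ≠ j := Fin.ne_of_val_ne (by omega)
    have h' : ¬ ((i : ℕ) < (j : ℕ)) := by omega
    have hcol : ∀ b, Rhat m n b (i, j) = if b = (j, i) then sgn m n i j else 0 := by
      intro b; simp [Rhat, hij, h']
    simp only [hcol, mul_ite, mul_zero, Finset.sum_ite_eq' Finset.univ, Finset.mem_univ,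
      if_true]
    have hji : j ≠ i := hij.symm
    have h2 : (j : ℕ) < (i : ℕ) := h
    simp only [Rhat', hji, h2, if_neg, if_pos, ite_mul, zero_mul]
    rcases eq_or_ne a (i, j) with rfl | ha
    · simp [sgn_mul m n j i]
    · simp [ha]

/-- `Ř ∘ Ř' = Ř' ∘ Ř = id`, so `Ř` is invertible with inverse `Ř'`. -/
theorem statement1 (m n : ℕ) (hmn : 1 ≤ m + n) :
    Rhat m n * Rhat' m n = 1 ∧ Rhat' m n * Rhat m n = 1 :=
  ⟨key1 m n, key2 m n⟩

end
end

section
/- (τ ⊗ id_V) ∘ (id_V ⊗ τ) ∘ (τ ⊗ id_V) = (id_V ⊗ τ) ∘ (τ ⊗ id_V) ∘ (id_V ⊗ τ) as endomorphisms of V ⊗ V ⊗ V, i.e. the q-deformed graded switch satisfies the braid (Yang–Baxter) relation. (Invariance of the virtual U_q(gl(m|n)) functor under the virtual Reidemeister 3 move.) -/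
/-!
STATEMENT 4: (τ ⊗ id) ∘ (id ⊗ τ) ∘ (τ ⊗ id) = (id ⊗ τ) ∘ (τ ⊗ id) ∘ (id ⊗ τ) on V ⊗ V ⊗ V:
the q-deformed graded switch satisfies the braid (Yang–Baxter) relation
(invariance under the virtual Reidemeister 3 move).
-/

noncomputable section

/-- The q-deformed graded switch `τ` on `V ⊗ V`:
`τ(x_i ⊗ x_j) = x_j ⊗ x_i` if `i, j ≤ m`; `= q·x_j ⊗ x_i` if `j ≤ m < i`;
`= q⁻¹·x_j ⊗ x_i` if `i ≤ m < j`; `= −x_j ⊗ x_i` if `i, j > m`. -/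
def tau (m n : ℕ) :
    Matrix (Fin (m + n) × Fin (m + n)) (Fin (m + n) × Fin (m + n)) Kq :=
  fun a x =>
    if a = (x.2, x.1) then
      (if (x.1 : ℕ) < m ∧ (x.2 : ℕ) < m then 1
       else if (x.2 : ℕ) < m ∧ m ≤ (x.1 : ℕ) then q
       else if (x.1 : ℕ) < m ∧ m ≤ (x.2 : ℕ) then q⁻¹
       else -1)
    else 0

/-- `T ⊗ id_V`, acting on `V ⊗ V ⊗ V`. -/
def lift12 {m n : ℕ}
    (T : Matrix (Fin (m + n) × Fin (m + n)) (Fin (m + n) × Fin (m + n)) Kq) :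
    Matrix (Fin (m + n) × Fin (m + n) × Fin (m + n))
      (Fin (m + n) × Fin (m + n) × Fin (m + n)) Kq :=
  fun a x => T (a.1, a.2.1) (x.1, x.2.1) * (if a.2.2 = x.2.2 then 1 else 0)

/-- `id_V ⊗ T`, acting on `V ⊗ V ⊗ V`. -/
def lift23 {m n : ℕ}
    (T : Matrix (Fin (m + n) × Fin (m + n)) (Fin (m + n) × Fin (m + n)) Kq) :
    Matrix (Fin (m + n) × Fin (m + n) × Fin (m + n))
      (Fin (m + n) × Fin (m + n) × Fin (m + n)) Kq :=
  fun a x => (if a.1 = x.1 then 1 else 0) * T (a.2.1, a.2.2) (x.2.1, x.2.2)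

lemma braid_of_swap (N : ℕ) (f : Fin N → Fin N → Kq)
    (L12 L23 : Matrix (Fin N × Fin N × Fin N) (Fin N × Fin N × Fin N) Kq)
    (h12 : ∀ a x, L12 a x =
      (if (a.1, a.2.1) = (x.2.1, x.1) then f x.1 x.2.1 else 0) * (if a.2.2 = x.2.2 then 1 else 0))
    (h23 : ∀ a x, L23 a x =
      (if a.1 = x.1 then 1 else 0) * (if (a.2.1, a.2.2) = (x.2.2, x.2.1) then f x.2.1 x.2.2 else 0)) :
    L12 * L23 * L12 = L23 * L12 * L23 := by
  ext ⟨a1, a2, a3⟩ ⟨x1, x2, x3⟩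
  simp only [Matrix.mul_apply, h12, h23, Fintype.sum_prod_type, Prod.mk.injEq]
  simp [Finset.mul_sum, Finset.sum_mul, mul_ite, ite_mul, ite_and, mul_comm, mul_left_comm]
  split_ifs <;> rfl

/-- the q-deformed graded switch satisfies the braid relation. -/
theorem statement4 (m n : ℕ) (hmn : 1 ≤ m + n) :
    lift12 (tau m n) * lift23 (tau m n) * lift12 (tau m n) =
      lift23 (tau m n) * lift12 (tau m n) * lift23 (tau m n) := by
  exact braid_of_swap (m + n)
    (fun i j =>
      if (i : ℕ) < m ∧ (j : ℕ) < m then 1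
      else if (j : ℕ) < m ∧ m ≤ (i : ℕ) then q
      else if (i : ℕ) < m ∧ m ≤ (j : ℕ) then q⁻¹
      else -1)
    _ _ (fun a x => rfl) (fun a x => rfl)

end
end

section
/- (Ř ⊗ id_V) ∘ (id_V ⊗ τ) ∘ (τ ⊗ id_V) = (id_V ⊗ τ) ∘ (τ ⊗ id_V) ∘ (id_V ⊗ Ř) as endomorphisms of V ⊗ V ⊗ V. (The mixed relation; invariance of the virtual U_q(gl(m|n)) functor under the detour move VT_4, proved case-by-case in Section 3.4 of the paper.) -/
/-!
STATEMENT 5: (Ř ⊗ id) ∘ (id ⊗ τ) ∘ (τ ⊗ id) = (id ⊗ τ) ∘ (τ ⊗ id) ∘ (id ⊗ Ř) on V ⊗ V ⊗ V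
(the mixed relation / detour move VT₄).
-/

noncomputable section

/-- The scalar coefficient of the graded switch `τ`. -/
def tc (m n : ℕ) (i j : Fin (m + n)) : Kq :=
  if (i : ℕ) < m ∧ (j : ℕ) < m then 1
  else if (j : ℕ) < m ∧ m ≤ (i : ℕ) then q
  else if (i : ℕ) < m ∧ m ≤ (j : ℕ) then q⁻¹
  else -1

lemma tau_eq (m n : ℕ) (a x : Fin (m+n) × Fin (m+n)) :
    tau m n a x = if a = (x.2, x.1) then tc m n x.1 x.2 else 0 := rfl

lemma mul_tau12 {m n : ℕ}
    (A : Matrix (Fin (m + n) × Fin (m + n) × Fin (m + n))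
      (Fin (m + n) × Fin (m + n) × Fin (m + n)) Kq) (a x) :
    (A * lift12 (tau m n)) a x
      = A a (x.2.1, x.1, x.2.2) * tc m n x.1 x.2.1 := by
  simp [Matrix.mul_apply, lift12, tau_eq, Fintype.sum_prod_type, Prod.ext_iff,
    mul_ite, ite_mul, ite_and, Finset.sum_ite_eq, Finset.sum_ite_eq']

lemma mul_tau23 {m n : ℕ}
    (A : Matrix (Fin (m + n) × Fin (m + n) × Fin (m + n))
      (Fin (m + n) × Fin (m + n) × Fin (m + n)) Kq) (a x) :
    (A * lift23 (tau m n)) a x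
      = A a (x.1, x.2.2, x.2.1) * tc m n x.2.1 x.2.2 := by
  simp [Matrix.mul_apply, lift23, tau_eq, Fintype.sum_prod_type, Prod.ext_iff,
    mul_ite, ite_mul, ite_and, Finset.sum_ite_eq, Finset.sum_ite_eq']

lemma tau12_mul {m n : ℕ}
    (A : Matrix (Fin (m + n) × Fin (m + n) × Fin (m + n))
      (Fin (m + n) × Fin (m + n) × Fin (m + n)) Kq) (a x) :
    (lift12 (tau m n) * A) a x
      = tc m n a.2.1 a.1 * A (a.2.1, a.1, a.2.2) x := by
  simp [Matrix.mul_apply, lift12, tau_eq, Fintype.sum_prod_type, Prod.ext_iff,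
    mul_ite, ite_mul, ite_and, Finset.sum_ite_eq, Finset.sum_ite_eq']

lemma tau23_mul {m n : ℕ}
    (A : Matrix (Fin (m + n) × Fin (m + n) × Fin (m + n))
      (Fin (m + n) × Fin (m + n) × Fin (m + n)) Kq) (a x) :
    (lift23 (tau m n) * A) a x
      = tc m n a.2.2 a.2.1 * A (a.1, a.2.2, a.2.1) x := by
  simp [Matrix.mul_apply, lift23, tau_eq, Fintype.sum_prod_type, Prod.ext_iff,
    mul_ite, ite_mul, ite_and, Finset.sum_ite_eq, Finset.sum_ite_eq']

lemma core (m n : ℕ) (i p r j k : Fin (m+n)) :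
    Rhat m n (p,r) (j,k) * (tc m n i k * tc m n i j)
      = tc m n i r * tc m n i p * Rhat m n (p,r) (j,k) := by
  simp only [Rhat]
  split_ifs <;> simp_all [Prod.ext_iff] <;> ring

/-- the mixed relation between `Ř` and the q-deformed graded switch `τ`. -/
theorem statement5 (m n : ℕ) (hmn : 1 ≤ m + n) :
    lift12 (Rhat m n) * lift23 (tau m n) * lift12 (tau m n) =
      lift23 (tau m n) * lift12 (tau m n) * lift23 (Rhat m n) := by
  ext a x
  obtain ⟨a1, a2, a3⟩ := a
  obtain ⟨i, j, k⟩ := x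
  rw [mul_tau12, mul_tau23, Matrix.mul_assoc, tau23_mul, tau12_mul]
  simp only [lift12, lift23]
  by_cases h : a3 = i
  · subst h
    simp only [if_pos rfl, if_true, mul_one]
    linear_combination core m n a3 a1 a2 j k
  · simp [h, Ne.symm h]


end
end

section
/- Define the left virtual curl L = (capL ⊗ id_V) ∘ (id_{V*} ⊗ τ) ∘ (cupL ⊗ id_V) and the right virtual curl R = (id_V ⊗ capR) ∘ (τ ⊗ id_{V*}) ∘ (id_V ⊗ cupR), both K-linear endomorphisms of V. Then L(x_i) = q^{m−n+1−2i}·x_i for i ≤ m and L(x_i) = q^{−n−3m−1+2i}·x_i for i > m; R(x_i) = q^{−m+n−1+2i}·x_i for i ≤ m and R(x_i) = q^{3m+n+1−2i}·x_i for i > m; consequently L ∘ R = R ∘ L = id_V. (Invariance of the virtual U_q(gl(m|n)) functor under the rotational move VR_1^{rot}.) -/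
/-!
STATEMENT 6: the left and right virtual curls, built from the (co)evaluation maps and the
q-deformed graded switch τ, are mutually inverse diagonal endomorphisms of V with the stated
diagonal entries (invariance under the rotational move VR₁^{rot}).
Maps between tensor powers of V (and of its dual V*, whose basis x_k^* is also indexed by
Fin (m+n)) are represented by their matrices in the bases of pure tensors.
-/

noncomputable section

/-- The coefficients `μ_i` of the quantum-trace map: `μ_i = q^{−m+n−1+2i}` if `i ≤ m`,
`μ_i = −q^{3m+n+1−2i}` if `i > m` (paper 1-based index `i` is `(i : ℕ) + 1` here). -/
def mu (m n : ℕ) (i : Fin (m + n)) : Kq :=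
  if (i : ℕ) < m then q ^ (-(m : ℤ) + (n : ℤ) - 1 + 2 * (((i : ℕ) : ℤ) + 1))
  else -q ^ (3 * (m : ℤ) + (n : ℤ) + 1 - 2 * (((i : ℕ) : ℤ) + 1))

/-- The coefficient of `x_k^* ⊗ x_k` in the left coevaluation `cupL(1)`:
`cupL : K → V* ⊗ V`,
`1 ↦ q^{m−n}(Σ_{k=1}^{m} q^{1−2k} x_k^* ⊗ x_k − Σ_{k=m+1}^{m+n} q^{−4m−1+2k} x_k^* ⊗ x_k)`. -/
def cupLcoef (m n : ℕ) (k : Fin (m + n)) : Kq :=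
  if (k : ℕ) < m then q ^ ((m : ℤ) - (n : ℤ)) * q ^ (1 - 2 * (((k : ℕ) : ℤ) + 1))
  else -(q ^ ((m : ℤ) - (n : ℤ)) * q ^ (-4 * (m : ℤ) - 1 + 2 * (((k : ℕ) : ℤ) + 1)))

/-- `cupL ⊗ id_V : V → V* ⊗ V ⊗ V`. -/
def cupL1 (m n : ℕ) :
    Matrix (Fin (m + n) × Fin (m + n) × Fin (m + n)) (Fin (m + n)) Kq :=
  fun a x => (if a.1 = a.2.1 then cupLcoef m n a.1 else 0) * (if a.2.2 = x then 1 else 0)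

/-- `id_{V*} ⊗ τ : V* ⊗ V ⊗ V → V* ⊗ V ⊗ V`. -/
def tau23 (m n : ℕ) :
    Matrix (Fin (m + n) × Fin (m + n) × Fin (m + n))
      (Fin (m + n) × Fin (m + n) × Fin (m + n)) Kq :=
  fun a x => (if a.1 = x.1 then 1 else 0) * tau m n (a.2.1, a.2.2) (x.2.1, x.2.2)

/-- `capL ⊗ id_V : V* ⊗ V ⊗ V → V`, where `capL : V* ⊗ V → K`, `x_i^* ⊗ x_j ↦ δ_{ij}`. -/
def capL1 (m n : ℕ) :
    Matrix (Fin (m + n)) (Fin (m + n) × Fin (m + n) × Fin (m + n)) Kq :=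
  fun a x => (if x.1 = x.2.1 then 1 else 0) * (if a = x.2.2 then 1 else 0)

/-- The left virtual curl `L = (capL ⊗ id_V) ∘ (id_{V*} ⊗ τ) ∘ (cupL ⊗ id_V) : V → V`. -/
def leftCurl (m n : ℕ) : Matrix (Fin (m + n)) (Fin (m + n)) Kq :=
  capL1 m n * tau23 m n * cupL1 m n

/-- `id_V ⊗ cupR : V → V ⊗ V ⊗ V*`, where `cupR : K → V ⊗ V*`, `1 ↦ Σ_k x_k ⊗ x_k^*`. -/
def cupR2 (m n : ℕ) :
    Matrix (Fin (m + n) × Fin (m + n) × Fin (m + n)) (Fin (m + n)) Kq :=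
  fun a x => (if a.1 = x then 1 else 0) * (if a.2.1 = a.2.2 then 1 else 0)

/-- `τ ⊗ id_{V*} : V ⊗ V ⊗ V* → V ⊗ V ⊗ V*`. -/
def tau12 (m n : ℕ) :
    Matrix (Fin (m + n) × Fin (m + n) × Fin (m + n))
      (Fin (m + n) × Fin (m + n) × Fin (m + n)) Kq :=
  fun a x => tau m n (a.1, a.2.1) (x.1, x.2.1) * (if a.2.2 = x.2.2 then 1 else 0)

/-- `id_V ⊗ capR : V ⊗ V ⊗ V* → V`, where `capR : V ⊗ V* → K`, `x_i ⊗ x_j^* ↦ δ_{ij}·μ_i`. -/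
def capR2 (m n : ℕ) :
    Matrix (Fin (m + n)) (Fin (m + n) × Fin (m + n) × Fin (m + n)) Kq :=
  fun a x => (if a = x.1 then 1 else 0) * (if x.2.1 = x.2.2 then mu m n x.2.1 else 0)

/-- The right virtual curl `R = (id_V ⊗ capR) ∘ (τ ⊗ id_{V*}) ∘ (id_V ⊗ cupR) : V → V`. -/
def rightCurl (m n : ℕ) : Matrix (Fin (m + n)) (Fin (m + n)) Kq :=
  capR2 m n * tau12 m n * cupR2 m n

/-!
Both curls are diagonal: contracting the cup with the cap forces every summation index to
equal the input index, so each curl sends `x_i` to a multiple of itself, the multiple being the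
diagonal entry `τ_{ii} = ±1` of the switch times the cup coefficient (left curl) or the cap
coefficient `μ_i` (right curl). These are `q ^ e_i` and `q ^ (-e_i)` for one and the same
exponent `e_i`, so the curls are mutually inverse.
-/

open Matrix

lemma q_ne_zero : q ≠ 0 := RatFunc.X_ne_zero

section Curls

variable (m n : ℕ)

lemma tau_apply_self (i : Fin (m + n)) :
    tau m n (i, i) (i, i) = if (i : ℕ) < m then 1 else -1 := by
  simp only [tau, if_true]
  split_ifs <;> first | rfl | omega

lemma tau_apply_eq_zero {j l k i : Fin (m + n)} (h : j ≠ i ∨ l ≠ k) :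
    tau m n (j, l) (k, i) = 0 :=
  if_neg fun hjl => h.elim (· (Prod.ext_iff.1 hjl).1) (· (Prod.ext_iff.1 hjl).2)

variable {m n}

lemma capL1_mul_apply {ι : Type*} [Fintype ι]
    (M : Matrix (Fin (m + n) × Fin (m + n) × Fin (m + n)) ι Kq) (x : Fin (m + n)) (i : ι) :
    (capL1 m n * M) x i = ∑ k, M (k, k, x) i := by
  simp [mul_apply, capL1, Fintype.sum_prod_type]

lemma capR2_mul_apply {ι : Type*} [Fintype ι]
    (M : Matrix (Fin (m + n) × Fin (m + n) × Fin (m + n)) ι Kq) (x : Fin (m + n)) (i : ι) :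
    (capR2 m n * M) x i = ∑ l, mu m n l * M (x, l, l) i := by
  simp [mul_apply, capR2, Fintype.sum_prod_type]

variable (m n)

lemma tau23_mul_cupL1_apply (k j l i : Fin (m + n)) :
    (tau23 m n * cupL1 m n) (k, j, l) i = tau m n (j, l) (k, i) * cupLcoef m n k := by
  simp [mul_apply, tau23, cupL1, Fintype.sum_prod_type, mul_ite]

lemma tau12_mul_cupR2_apply (j l r i : Fin (m + n)) :
    (tau12 m n * cupR2 m n) (j, l, r) i = tau m n (j, l) (i, r) := by
  simp [mul_apply, tau12, cupR2, Fintype.sum_prod_type, mul_ite]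

lemma leftCurl_eq_diagonal_tau :
    leftCurl m n = diagonal fun i => tau m n (i, i) (i, i) * cupLcoef m n i := by
  ext x i
  rw [leftCurl, Matrix.mul_assoc, capL1_mul_apply, Finset.sum_eq_single i,
    tau23_mul_cupL1_apply]
  · rcases eq_or_ne x i with rfl | hxi
    · simp
    · rw [diagonal_apply_ne _ hxi, tau_apply_eq_zero m n (.inr hxi), zero_mul]
  · intro k _ hk
    rw [tau23_mul_cupL1_apply, tau_apply_eq_zero m n (.inl hk), zero_mul]
  · simp

lemma rightCurl_eq_diagonal_tau :
    rightCurl m n = diagonal fun i => tau m n (i, i) (i, i) * mu m n i := by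
  ext x i
  rw [rightCurl, Matrix.mul_assoc, capR2_mul_apply, Finset.sum_eq_single i,
    tau12_mul_cupR2_apply]
  · rcases eq_or_ne x i with rfl | hxi
    · simp [mul_comm]
    · rw [diagonal_apply_ne _ hxi, tau_apply_eq_zero m n (.inl hxi), mul_zero]
  · intro l _ hl
    rw [tau12_mul_cupR2_apply, tau_apply_eq_zero m n (.inr hl), mul_zero]
  · simp

def curlExponent (i : Fin (m + n)) : ℤ :=
  if (i : ℕ) < m then (m : ℤ) - n + 1 - 2 * ((i : ℕ) + 1)
  else -(n : ℤ) - 3 * m - 1 + 2 * ((i : ℕ) + 1)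

lemma tau_apply_self_mul_cupLcoef (i : Fin (m + n)) :
    tau m n (i, i) (i, i) * cupLcoef m n i = q ^ curlExponent m n i := by
  rw [tau_apply_self, cupLcoef, curlExponent]
  split_ifs
  · rw [one_mul, ← zpow_add₀ q_ne_zero]
    congr 1; ring
  · rw [neg_one_mul, neg_neg, ← zpow_add₀ q_ne_zero]
    congr 1; ring

lemma tau_apply_self_mul_mu (i : Fin (m + n)) :
    tau m n (i, i) (i, i) * mu m n i = q ^ (-curlExponent m n i) := by
  rw [tau_apply_self, mu, curlExponent]
  split_ifs
  · rw [one_mul]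
    congr 1; ring
  · rw [neg_one_mul, neg_neg]
    congr 1; ring

lemma leftCurl_eq_diagonal : leftCurl m n = diagonal fun i => q ^ curlExponent m n i := by
  simp only [leftCurl_eq_diagonal_tau, tau_apply_self_mul_cupLcoef]

lemma rightCurl_eq_diagonal : rightCurl m n = diagonal fun i => q ^ (-curlExponent m n i) := by
  simp only [rightCurl_eq_diagonal_tau, tau_apply_self_mul_mu]

end Curls

theorem statement6_general (m n : ℕ) :
    (∀ x i : Fin (m + n), leftCurl m n x i =
      if x = i then
        (if (i : ℕ) < m then q ^ ((m : ℤ) - (n : ℤ) + 1 - 2 * (((i : ℕ) : ℤ) + 1))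
         else q ^ (-(n : ℤ) - 3 * (m : ℤ) - 1 + 2 * (((i : ℕ) : ℤ) + 1)))
      else 0) ∧
    (∀ x i : Fin (m + n), rightCurl m n x i =
      if x = i then
        (if (i : ℕ) < m then q ^ (-(m : ℤ) + (n : ℤ) - 1 + 2 * (((i : ℕ) : ℤ) + 1))
         else q ^ (3 * (m : ℤ) + (n : ℤ) + 1 - 2 * (((i : ℕ) : ℤ) + 1)))
      else 0) ∧
    leftCurl m n * rightCurl m n = 1 ∧ rightCurl m n * leftCurl m n = 1 := by
  refine ⟨fun x i => ?_, fun x i => ?_, ?_, ?_⟩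
  · rw [leftCurl_eq_diagonal, diagonal_apply]
    rcases eq_or_ne x i with rfl | hxi
    · rw [if_pos rfl, if_pos rfl, curlExponent]
      split_ifs <;> rfl
    · simp only [hxi, if_false]
  · rw [rightCurl_eq_diagonal, diagonal_apply]
    rcases eq_or_ne x i with rfl | hxi
    · rw [if_pos rfl, if_pos rfl, curlExponent]
      split_ifs <;> congr 1 <;> ring
    · simp only [hxi, if_false]
  all_goals
    simp only [leftCurl_eq_diagonal, rightCurl_eq_diagonal, diagonal_mul_diagonal,
      ← zpow_add₀ q_ne_zero, add_neg_cancel, neg_add_cancel, zpow_zero, diagonal_one]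

/-- the left and right virtual curls are the stated diagonal maps, and they are
mutually inverse. -/
theorem statement6 (m n : ℕ) (hmn : 1 ≤ m + n) :
    (∀ x i : Fin (m + n), leftCurl m n x i =
      if x = i then
        (if (i : ℕ) < m then q ^ ((m : ℤ) - (n : ℤ) + 1 - 2 * (((i : ℕ) : ℤ) + 1))
         else q ^ (-(n : ℤ) - 3 * (m : ℤ) - 1 + 2 * (((i : ℕ) : ℤ) + 1)))
      else 0) ∧
    (∀ x i : Fin (m + n), rightCurl m n x i =
      if x = i then
        (if (i : ℕ) < m then q ^ (-(m : ℤ) + (n : ℤ) - 1 + 2 * (((i : ℕ) : ℤ) + 1))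
         else q ^ (3 * (m : ℤ) + (n : ℤ) + 1 - 2 * (((i : ℕ) : ℤ) + 1)))
      else 0) ∧
    leftCurl m n * rightCurl m n = 1 ∧ rightCurl m n * leftCurl m n = 1 :=
  statement6_general m n

end
end

section
/- For every N ≥ 2 there is a (necessarily unique) group homomorphism ρ^{m|n}_N: VB_N → GL(V^{⊗N}) sending each generator σ_i to the automorphism that acts by Ř on the i-th and (i+1)-st tensor factors and by the identity on all other factors, and each generator χ_i to the automorphism that acts by τ on the i-th and (i+1)-st tensor factors and by the identity on all other factors. (The virtual U_q(gl(m|n)) Reshetikhin–Turaev functor restricted to virtual braids is a representation of the virtual braid group.) -/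
/-!
STATEMENT 8: for every N ≥ 2 (written N = M + 2 below) there is a unique group homomorphism
ρ^{m|n}_N : VB_N → GL(V^{⊗N}) sending σ_i to the automorphism acting by Ř on the i-th and
(i+1)-st tensor factors and by the identity elsewhere, and χ_i to the automorphism acting by τ
on those factors. Automorphisms of V^{⊗N} are represented as units of the matrix ring in the
basis of pure tensors, indexed by functions Fin N → Fin (m+n).
-/

noncomputable section

/-- The free-group generator corresponding to the classical braid generator `σ i`
(generators of the virtual braid group on `N = M + 2` strands are indexed by `Fin (M + 1)`). -/
def sg {M : ℕ} (i : Fin (M + 1)) : FreeGroup (Fin (M + 1) ⊕ Fin (M + 1)) :=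
  FreeGroup.of (Sum.inl i)

/-- The free-group generator corresponding to the virtual crossing generator `χ i`. -/
def cg {M : ℕ} (i : Fin (M + 1)) : FreeGroup (Fin (M + 1) ⊕ Fin (M + 1)) :=
  FreeGroup.of (Sum.inr i)

/-- The defining relations of the virtual braid group `VB_N` on `N = M + 2` strands:
commutation relations for `|i − j| > 1`, the braid relations `σσσ = σσσ` and `χχχ = χχχ`,
the involutivity `χ_i² = 1`, and the mixed relation `σ_i χ_{i+1} χ_i = χ_{i+1} χ_i σ_{i+1}`. -/
def VBRels (M : ℕ) : Set (FreeGroup (Fin (M + 1) ⊕ Fin (M + 1))) :=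
  {r | (∃ i j : Fin (M + 1), 1 < ((i : ℤ) - (j : ℤ)).natAbs ∧
          (r = sg i * sg j * (sg i)⁻¹ * (sg j)⁻¹ ∨
           r = cg i * cg j * (cg i)⁻¹ * (cg j)⁻¹ ∨
           r = sg i * cg j * (sg i)⁻¹ * (cg j)⁻¹)) ∨
       (∃ i j : Fin (M + 1), (j : ℕ) = (i : ℕ) + 1 ∧
          (r = sg i * sg j * sg i * (sg j * sg i * sg j)⁻¹ ∨
           r = cg i * cg j * cg i * (cg j * cg i * cg j)⁻¹ ∨
           r = sg i * cg j * cg i * (cg j * cg i * sg j)⁻¹)) ∨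
       (∃ i : Fin (M + 1), r = cg i * cg i)}

/-- The virtual braid group on `N = M + 2` strands, as a presented group. -/
abbrev VB (M : ℕ) := PresentedGroup (VBRels M)

/-- The endomorphism of `V^{⊗(M+2)}` acting by `T` on the `i`-th and `(i+1)`-st tensor factors
and by the identity on all other factors. -/
def actOn {d M : ℕ} (T : Matrix (Fin d × Fin d) (Fin d × Fin d) Kq) (i : Fin (M + 1)) :
    Matrix (Fin (M + 2) → Fin d) (Fin (M + 2) → Fin d) Kq :=
  fun a x =>
    T (a i.castSucc, a i.succ) (x i.castSucc, x i.succ) *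
      ∏ k : Fin (M + 2),
        if k = i.castSucc ∨ k = i.succ then 1 else if a k = x k then 1 else 0

/-!
Both `Ř` and `τ` are sums of monomial matrices: `Ř = D + S ∘ swap` and `τ = T ∘ swap` for explicit
coefficient functions `D`, `S`, `T` on pairs of indices. Products of monomial matrices are monomial,
so the relations of `VB_N` in `End(V ⊗ V)` and `End(V ⊗ V ⊗ V)` (the Hecke relation
`Ř² = (q - q⁻¹) Ř + 1`, which makes `Ř` invertible, `τ² = 1`, the Yang–Baxter equations for `Ř`
and `τ`, and the mixed relation) become identities between the coefficients.

An operator acting on two tensor factors of `V^{⊗N}` is, after reordering the factors, the same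
operator on a window of two, three or four factors tensored with the identity on the others. This
transports the local relations to `V^{⊗N}`, so the prescribed images of the generators satisfy the
defining relations of `VB_N`; uniqueness holds because the generators generate.
-/

lemma exists_embedding_fin_two {ι : Type*} {c s : ι} (h : c ≠ s) :
    ∃ w : Fin 2 ↪ ι, w 0 = c ∧ w 1 = s :=
  ⟨⟨![c, s], by intro u v; fin_cases u <;> fin_cases v <;> simp [h, h.symm]⟩, rfl, rfl⟩

namespace Matrix

open Kronecker

section Monomial

variable {R α β : Type*} [CommSemiring R] [DecidableEq α] [DecidableEq β]

def monomialOf (σ : α → α) (c : α → R) : Matrix α α R :=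
  fun a x => (if a = σ x then 1 else 0) * c x

lemma monomialOf_mul_monomialOf [Fintype α] (σ τ : α → α) (c d : α → R) :
    monomialOf σ c * monomialOf τ d = monomialOf (σ ∘ τ) (fun x => c (τ x) * d x) := by
  ext a x
  rw [mul_apply, Finset.sum_eq_single (τ x)]
  · simp [monomialOf]
  · intro b _ hb
    simp [monomialOf, hb]
  · simp

lemma one_eq_monomialOf : (1 : Matrix α α R) = monomialOf id fun _ => 1 := by
  ext a x
  simp [monomialOf, one_apply]

lemma smul_monomialOf (r : R) (σ : α → α) (c : α → R) :
    r • monomialOf σ c = monomialOf σ (fun x => r * c x) := by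
  ext a x
  simp only [monomialOf, smul_apply, smul_eq_mul]
  ring

lemma kronecker_monomialOf (σ : α → α) (τ : β → β) (c : α → R) (d : β → R) :
    monomialOf σ c ⊗ₖ monomialOf τ d = monomialOf (Prod.map σ τ) (fun x => c x.1 * d x.2) := by
  ext ⟨a₁, a₂⟩ ⟨x₁, x₂⟩
  simp only [kronecker_apply, monomialOf, Prod.map_apply, Prod.mk.injEq]
  split_ifs <;> simp_all

lemma submatrix_monomialOf {γ : Type*} [DecidableEq γ] (σ : α → α) (c : α → R) (e : γ ≃ α) :
    (monomialOf σ c).submatrix e e = monomialOf (e.symm ∘ σ ∘ e) (c ∘ e) := by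
  ext a x
  simp [monomialOf, Equiv.eq_symm_apply]

end Monomial

section OnSites

variable {R α ι κ : Type*} [CommSemiring R]

def onSites [DecidableEq α] [Fintype ι] [DecidableEq ι] (T : Matrix (α × α) (α × α) R) (c s : ι) :
    Matrix (ι → α) (ι → α) R :=
  fun a x =>
    T (a c, a s) (x c, x s) *
      ∏ k : ι, if k = c ∨ k = s then 1 else if a k = x k then 1 else 0

section ExtendAlong

variable [DecidableEq ι] [Fintype κ]

def splitAlong (w : κ ↪ ι) : (ι → α) ≃ (κ → α) × ({k // k ∉ Set.range w} → α) :=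
  (Equiv.piEquivPiSubtypeProd (· ∈ Set.range w) fun _ => α).trans
    (Equiv.prodCongr ((Equiv.ofInjective w w.injective).arrowCongr (Equiv.refl α)).symm
      (Equiv.refl _))

lemma splitAlong_apply (w : κ ↪ ι) (a : ι → α) :
    splitAlong w a = (a ∘ w, fun k : {k // k ∉ Set.range w} => a k) := rfl

variable [Fintype ι] [DecidableEq α]

def extendAlong (w : κ ↪ ι) (A : Matrix (κ → α) (κ → α) R) : Matrix (ι → α) (ι → α) R :=
  (A ⊗ₖ (1 : Matrix ({k // k ∉ Set.range w} → α) _ R)).submatrix (splitAlong w) (splitAlong w)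

lemma extendAlong_one (w : κ ↪ ι) : extendAlong w (1 : Matrix (κ → α) (κ → α) R) = 1 := by
  rw [extendAlong, one_kronecker_one, submatrix_one_equiv]

variable [DecidableEq κ]

lemma extendAlong_mul [Fintype α] (w : κ ↪ ι) (A B : Matrix (κ → α) (κ → α) R) :
    extendAlong w A * extendAlong w B = extendAlong w (A * B) := by
  rw [extendAlong, extendAlong, extendAlong, submatrix_mul_equiv, ← mul_kronecker_mul, one_mul]

lemma onSites_embedding_eq_extendAlong (w : κ ↪ ι) (c s : κ) (T : Matrix (α × α) (α × α) R) :
    onSites T (w c) (w s) = extendAlong w (onSites T c s) := by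
  ext a x
  simp only [onSites, extendAlong, submatrix_apply, splitAlong_apply, kronecker_apply, one_apply]
  rw [← Fintype.prod_subtype_mul_prod_subtype (· ∈ Set.range w), mul_assoc]
  congr 2
  · convert (Fintype.prod_equiv (Equiv.ofInjective w w.injective) _ _ fun t => rfl).symm
      <;> simp [w.injective.eq_iff]
  · trans ∏ k : {k // k ∉ Set.range w}, if a k = x k then (1 : R) else 0
    · refine Fintype.prod_congr _ _ fun k => if_neg ?_
      rintro (h | h) <;> exact k.2 ⟨_, h.symm⟩
    · rw [Finset.prod_boole]
      simp [funext_iff]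

end ExtendAlong

end OnSites

section Windows

variable {R α : Type*} [CommSemiring R] [DecidableEq α]

@[simps]
def finThreeArrowEquiv (α : Type*) : (Fin 3 → α) ≃ α × α × α where
  toFun f := (f 0, f 1, f 2)
  invFun p := ![p.1, p.2.1, p.2.2]
  left_inv f := by ext k; fin_cases k <;> rfl
  right_inv _ := rfl

@[simps]
def finFourArrowEquiv (α : Type*) : (Fin 4 → α) ≃ (α × α) × (α × α) where
  toFun f := ((f 0, f 1), (f 2, f 3))
  invFun p := ![p.1.1, p.1.2, p.2.1, p.2.2]
  left_inv f := by ext k; fin_cases k <;> rfl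
  right_inv _ := rfl

def onFirstTwo (T : Matrix (α × α) (α × α) R) : Matrix (α × α × α) (α × α × α) R :=
  (T ⊗ₖ (1 : Matrix α α R)).submatrix (Equiv.prodAssoc α α α).symm (Equiv.prodAssoc α α α).symm

def onLastTwo (T : Matrix (α × α) (α × α) R) : Matrix (α × α × α) (α × α × α) R :=
  (1 : Matrix α α R) ⊗ₖ T

lemma onSites_zero_one_fin_two (T : Matrix (α × α) (α × α) R) :
    onSites T (0 : Fin 2) 1 = T.submatrix (finTwoArrowEquiv α) (finTwoArrowEquiv α) := by
  ext a x
  simp [onSites, Fin.prod_univ_two]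

lemma onSites_zero_one_fin_three (T : Matrix (α × α) (α × α) R) :
    onSites T (0 : Fin 3) 1 =
      (onFirstTwo T).submatrix (finThreeArrowEquiv α) (finThreeArrowEquiv α) := by
  ext a x
  simp [onSites, onFirstTwo, Fin.prod_univ_three, one_apply]

lemma onSites_one_two_fin_three (T : Matrix (α × α) (α × α) R) :
    onSites T (1 : Fin 3) 2 =
      (onLastTwo T).submatrix (finThreeArrowEquiv α) (finThreeArrowEquiv α) := by
  ext a x
  simp [onSites, onLastTwo, Fin.prod_univ_three, one_apply, mul_comm]

lemma onSites_zero_one_fin_four (T : Matrix (α × α) (α × α) R) :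
    onSites T (0 : Fin 4) 1 =
      (T ⊗ₖ (1 : Matrix (α × α) (α × α) R)).submatrix (finFourArrowEquiv α)
        (finFourArrowEquiv α) := by
  ext a x
  simp [onSites, Fin.prod_univ_four, one_apply, ite_and]
  split_ifs <;> rfl

lemma onSites_two_three_fin_four (T : Matrix (α × α) (α × α) R) :
    onSites T (2 : Fin 4) 3 =
      ((1 : Matrix (α × α) (α × α) R) ⊗ₖ T).submatrix (finFourArrowEquiv α)
        (finFourArrowEquiv α) := by
  ext a x
  simp [onSites, Fin.prod_univ_four, one_apply, ite_and, mul_comm]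
  split_ifs <;> rfl

lemma onFirstTwo_add (T S : Matrix (α × α) (α × α) R) :
    onFirstTwo (T + S) = onFirstTwo T + onFirstTwo S := by
  rw [onFirstTwo, onFirstTwo, onFirstTwo, add_kronecker]
  rfl

lemma onLastTwo_add (T S : Matrix (α × α) (α × α) R) :
    onLastTwo (T + S) = onLastTwo T + onLastTwo S :=
  kronecker_add _ _ _

lemma onFirstTwo_monomialOf (σ : α × α → α × α) (c : α × α → R) :
    onFirstTwo (monomialOf σ c) =
      monomialOf (fun x => ((σ (x.1, x.2.1)).1, (σ (x.1, x.2.1)).2, x.2.2))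
        (fun x => c (x.1, x.2.1)) := by
  rw [onFirstTwo, one_eq_monomialOf, kronecker_monomialOf, submatrix_monomialOf]
  congr 1 with x
  simp

lemma onLastTwo_monomialOf (σ : α × α → α × α) (c : α × α → R) :
    onLastTwo (monomialOf σ c) = monomialOf (fun x => (x.1, σ x.2)) (fun x => c x.2) := by
  rw [onLastTwo, one_eq_monomialOf, kronecker_monomialOf]
  congr 1 with x
  simp

end Windows

section LocalRelations

variable {R α ι : Type*} [CommSemiring R] [DecidableEq α] [Fintype ι] [DecidableEq ι]

lemma onSites_one {c s : ι} (h : c ≠ s) : onSites (1 : Matrix (α × α) (α × α) R) c s = 1 := by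
  obtain ⟨w, rfl, rfl⟩ := exists_embedding_fin_two h
  rw [onSites_embedding_eq_extendAlong, onSites_zero_one_fin_two, submatrix_one_equiv,
    extendAlong_one]

variable [Fintype α]

lemma onSites_mul {c s : ι} (h : c ≠ s) (T S : Matrix (α × α) (α × α) R) :
    onSites T c s * onSites S c s = onSites (T * S) c s := by
  obtain ⟨w, rfl, rfl⟩ := exists_embedding_fin_two h
  simp only [onSites_embedding_eq_extendAlong, extendAlong_mul, onSites_zero_one_fin_two,
    submatrix_mul_equiv]

lemma onSites_mul_comm (w : Fin 4 ↪ ι) (T S : Matrix (α × α) (α × α) R) :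
    onSites T (w 0) (w 1) * onSites S (w 2) (w 3) =
      onSites S (w 2) (w 3) * onSites T (w 0) (w 1) := by
  simp only [onSites_embedding_eq_extendAlong, extendAlong_mul, onSites_zero_one_fin_four,
    onSites_two_three_fin_four, submatrix_mul_equiv, ← mul_kronecker_mul, one_mul, mul_one]

lemma onSites_braid (w : Fin 3 ↪ ι) {A B C D E F : Matrix (α × α) (α × α) R}
    (h : onFirstTwo A * onLastTwo B * onFirstTwo C = onLastTwo D * onFirstTwo E * onLastTwo F) :
    onSites A (w 0) (w 1) * onSites B (w 1) (w 2) * onSites C (w 0) (w 1) =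
      onSites D (w 1) (w 2) * onSites E (w 0) (w 1) * onSites F (w 1) (w 2) := by
  simp only [onSites_embedding_eq_extendAlong, extendAlong_mul, onSites_zero_one_fin_three,
    onSites_one_two_fin_three, submatrix_mul_equiv, h]

def onSitesHom {c s : ι} (h : c ≠ s) : Matrix (α × α) (α × α) R →* Matrix (ι → α) (ι → α) R where
  toFun T := onSites T c s
  map_one' := onSites_one h
  map_mul' T S := (onSites_mul h T S).symm

lemma onSitesHom_apply {c s : ι} (h : c ≠ s) (T : Matrix (α × α) (α × α) R) :
    onSitesHom h T = onSites T c s := rfl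

end LocalRelations

end Matrix

open Matrix

section Coefficients

variable (m n : ℕ)

def rhatDiagCoeff (x : Fin (m + n) × Fin (m + n)) : Kq :=
  if (x.1 : ℕ) = x.2 then (if m ≤ (x.1 : ℕ) then -q⁻¹ else q)
  else if (x.1 : ℕ) < x.2 then q - q⁻¹ else 0

def rhatSwapCoeff (x : Fin (m + n) × Fin (m + n)) : Kq :=
  if x.1 = x.2 then 0 else sgn m n x.1 x.2

def tauCoeff (x : Fin (m + n) × Fin (m + n)) : Kq :=
  if m ≤ (x.1 : ℕ) then (if m ≤ (x.2 : ℕ) then -1 else q)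
  else (if m ≤ (x.2 : ℕ) then q⁻¹ else 1)

lemma rhat_eq_monomialOf :
    Rhat m n = monomialOf id (rhatDiagCoeff m n) + monomialOf Prod.swap (rhatSwapCoeff m n) := by
  ext ⟨a₁, a₂⟩ ⟨x₁, x₂⟩
  simp only [Rhat, monomialOf, Matrix.add_apply, rhatDiagCoeff, rhatSwapCoeff, sgn, id,
    Prod.swap_prod_mk, Prod.mk.injEq, Fin.ext_iff]
  split_ifs <;> first | ring1 | (exfalso; omega)

lemma tau_eq_monomialOf : tau m n = monomialOf Prod.swap (tauCoeff m n) := by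
  ext a ⟨x₁, x₂⟩
  simp only [tau, monomialOf, tauCoeff, Prod.swap_prod_mk, boole_mul]
  split_ifs <;> first | rfl | (exfalso; omega)

lemma tauCoeff_swap_mul_self (i j : Fin (m + n)) :
    tauCoeff m n (j, i) * tauCoeff m n (i, j) = 1 := by
  have := q_ne_zero
  simp only [tauCoeff]
  split_ifs <;> field_simp

lemma rhatCoeff_hecke_diag (i j : Fin (m + n)) :
    rhatDiagCoeff m n (i, j) * rhatDiagCoeff m n (i, j) +
        rhatSwapCoeff m n (j, i) * rhatSwapCoeff m n (i, j) =
      (q - q⁻¹) * rhatDiagCoeff m n (i, j) + 1 := by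
  have := q_ne_zero
  simp only [rhatDiagCoeff, rhatSwapCoeff, sgn, Fin.ext_iff]
  split_ifs <;> first | omega | ring1 | (field_simp; try ring1)

lemma rhatCoeff_hecke_swap (i j : Fin (m + n)) :
    rhatDiagCoeff m n (j, i) * rhatSwapCoeff m n (i, j) +
        rhatSwapCoeff m n (i, j) * rhatDiagCoeff m n (i, j) =
      (q - q⁻¹) * rhatSwapCoeff m n (i, j) := by
  simp only [rhatDiagCoeff, rhatSwapCoeff, sgn, Fin.ext_iff]
  split_ifs <;> first | omega | ring1

lemma rhatSwapCoeff_swap_mul_self_of_ne {i j : Fin (m + n)} (h : i ≠ j) :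
    rhatSwapCoeff m n (j, i) * rhatSwapCoeff m n (i, j) = 1 := by
  simp only [rhatSwapCoeff, sgn, if_neg h, if_neg h.symm, and_comm]
  split_ifs <;> norm_num

lemma rhatCoeff_ybe_id (i j k : Fin (m + n)) :
    rhatDiagCoeff m n (i, j) * rhatDiagCoeff m n (j, k) * rhatDiagCoeff m n (i, j) +
        rhatSwapCoeff m n (j, i) * rhatDiagCoeff m n (i, k) * rhatSwapCoeff m n (i, j) =
      rhatDiagCoeff m n (j, k) * rhatDiagCoeff m n (i, j) * rhatDiagCoeff m n (j, k) +
        rhatSwapCoeff m n (k, j) * rhatDiagCoeff m n (i, k) * rhatSwapCoeff m n (j, k) := by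
  -- the identity component of the Yang–Baxter equation follows from the Hecke relation
  have e₁ : (rhatSwapCoeff m n (j, i) * rhatSwapCoeff m n (i, j) - 1) *
      (rhatDiagCoeff m n (j, k) - rhatDiagCoeff m n (i, k)) = 0 := by
    rcases eq_or_ne i j with rfl | h
    · ring
    · rw [rhatSwapCoeff_swap_mul_self_of_ne m n h]; ring
  have e₂ : (rhatSwapCoeff m n (k, j) * rhatSwapCoeff m n (j, k) - 1) *
      (rhatDiagCoeff m n (i, j) - rhatDiagCoeff m n (i, k)) = 0 := by
    rcases eq_or_ne j k with rfl | h
    · ring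
    · rw [rhatSwapCoeff_swap_mul_self_of_ne m n h]; ring
  linear_combination rhatDiagCoeff m n (j, k) * rhatCoeff_hecke_diag m n i j -
    rhatDiagCoeff m n (i, j) * rhatCoeff_hecke_diag m n j k - e₁ + e₂

lemma rhatDiagCoeff_ybe_swap₁₂ {i j : Fin (m + n)} (h : i ≠ j) (k : Fin (m + n)) :
    rhatDiagCoeff m n (j, i) * rhatDiagCoeff m n (i, k) +
        rhatDiagCoeff m n (j, k) * rhatDiagCoeff m n (i, j) =
      rhatDiagCoeff m n (i, k) * rhatDiagCoeff m n (j, k) := by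
  rw [Ne, Fin.ext_iff] at h
  simp only [rhatDiagCoeff]
  split_ifs <;> first | omega | ring1

lemma rhatDiagCoeff_ybe_swap₂₃ (i : Fin (m + n)) {j k : Fin (m + n)} (h : j ≠ k) :
    rhatDiagCoeff m n (i, k) * rhatDiagCoeff m n (i, j) =
      rhatDiagCoeff m n (k, j) * rhatDiagCoeff m n (i, k) +
        rhatDiagCoeff m n (i, j) * rhatDiagCoeff m n (j, k) := by
  rw [Ne, Fin.ext_iff] at h
  simp only [rhatDiagCoeff]
  split_ifs <;> first | omega | ring1

lemma rhatCoeff_ybe_swap₁₂ (i j k : Fin (m + n)) :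
    rhatDiagCoeff m n (j, i) * rhatDiagCoeff m n (i, k) * rhatSwapCoeff m n (i, j) +
        rhatSwapCoeff m n (i, j) * rhatDiagCoeff m n (j, k) * rhatDiagCoeff m n (i, j) =
      rhatDiagCoeff m n (i, k) * rhatSwapCoeff m n (i, j) * rhatDiagCoeff m n (j, k) := by
  rcases eq_or_ne i j with rfl | h
  · simp [rhatSwapCoeff]
  · linear_combination rhatSwapCoeff m n (i, j) * rhatDiagCoeff_ybe_swap₁₂ m n h k

lemma rhatCoeff_ybe_swap₂₃ (i j k : Fin (m + n)) :
    rhatDiagCoeff m n (i, k) * rhatSwapCoeff m n (j, k) * rhatDiagCoeff m n (i, j) =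
      rhatDiagCoeff m n (k, j) * rhatDiagCoeff m n (i, k) * rhatSwapCoeff m n (j, k) +
        rhatSwapCoeff m n (j, k) * rhatDiagCoeff m n (i, j) * rhatDiagCoeff m n (j, k) := by
  rcases eq_or_ne j k with rfl | h
  · simp [rhatSwapCoeff]
  · linear_combination rhatSwapCoeff m n (j, k) * rhatDiagCoeff_ybe_swap₂₃ m n i h

end Coefficients

section RMatrixRelations

variable (m n : ℕ)

theorem rhat_mul_self : Rhat m n * Rhat m n = (q - q⁻¹) • Rhat m n + 1 := by
  rw [rhat_eq_monomialOf, add_mul, mul_add, mul_add, monomialOf_mul_monomialOf,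
    monomialOf_mul_monomialOf, monomialOf_mul_monomialOf, monomialOf_mul_monomialOf, smul_add,
    smul_monomialOf, smul_monomialOf, one_eq_monomialOf (α := Fin (m + n) × Fin (m + n))]
  ext ⟨a₁, a₂⟩ ⟨x₁, x₂⟩
  simp only [Matrix.add_apply, monomialOf, Function.comp_apply, id, Prod.swap_prod_mk]
  linear_combination
    (if (a₁, a₂) = (x₁, x₂) then (1 : Kq) else 0) * rhatCoeff_hecke_diag m n x₁ x₂ +
    (if (a₁, a₂) = (x₂, x₁) then (1 : Kq) else 0) * rhatCoeff_hecke_swap m n x₁ x₂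

theorem tau_mul_self : tau m n * tau m n = 1 := by
  rw [tau_eq_monomialOf, monomialOf_mul_monomialOf,
    one_eq_monomialOf (α := Fin (m + n) × Fin (m + n))]
  ext a ⟨x₁, x₂⟩
  simp only [monomialOf, Function.comp_apply, id, Prod.swap_prod_mk]
  linear_combination (if a = (x₁, x₂) then (1 : Kq) else 0) * tauCoeff_swap_mul_self m n x₁ x₂

theorem rhat_braid :
    onFirstTwo (Rhat m n) * onLastTwo (Rhat m n) * onFirstTwo (Rhat m n) =
      onLastTwo (Rhat m n) * onFirstTwo (Rhat m n) * onLastTwo (Rhat m n) := by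
  simp only [rhat_eq_monomialOf, onFirstTwo_add, onLastTwo_add, onFirstTwo_monomialOf,
    onLastTwo_monomialOf, add_mul, mul_add, monomialOf_mul_monomialOf]
  ext ⟨a₁, a₂, a₃⟩ ⟨x₁, x₂, x₃⟩
  simp only [Matrix.add_apply, monomialOf, Function.comp_apply, id, Prod.swap_prod_mk]
  -- the components along the other three permutations of the factors agree term by term
  linear_combination
    (if (a₁, a₂, a₃) = (x₁, x₂, x₃) then (1 : Kq) else 0) * rhatCoeff_ybe_id m n x₁ x₂ x₃ +
    (if (a₁, a₂, a₃) = (x₂, x₁, x₃) then (1 : Kq) else 0) * rhatCoeff_ybe_swap₁₂ m n x₁ x₂ x₃ +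
    (if (a₁, a₂, a₃) = (x₁, x₃, x₂) then (1 : Kq) else 0) * rhatCoeff_ybe_swap₂₃ m n x₁ x₂ x₃

theorem tau_braid :
    onFirstTwo (tau m n) * onLastTwo (tau m n) * onFirstTwo (tau m n) =
      onLastTwo (tau m n) * onFirstTwo (tau m n) * onLastTwo (tau m n) := by
  simp only [tau_eq_monomialOf, onFirstTwo_monomialOf, onLastTwo_monomialOf,
    monomialOf_mul_monomialOf]
  ext ⟨a₁, a₂, a₃⟩ ⟨x₁, x₂, x₃⟩
  simp only [monomialOf, Function.comp_apply, Prod.swap_prod_mk]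
  ring

theorem rhat_tau_braid :
    onFirstTwo (Rhat m n) * onLastTwo (tau m n) * onFirstTwo (tau m n) =
      onLastTwo (tau m n) * onFirstTwo (tau m n) * onLastTwo (Rhat m n) := by
  simp only [rhat_eq_monomialOf, tau_eq_monomialOf, onFirstTwo_add, onLastTwo_add,
    onFirstTwo_monomialOf, onLastTwo_monomialOf, add_mul, mul_add, monomialOf_mul_monomialOf]
  ext ⟨a₁, a₂, a₃⟩ ⟨x₁, x₂, x₃⟩
  simp only [Matrix.add_apply, monomialOf, Function.comp_apply, id, Prod.swap_prod_mk]
  ring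

end RMatrixRelations

section Representation

variable (m n M : ℕ)

def rhatUnit : (Matrix (Fin (m + n) × Fin (m + n)) (Fin (m + n) × Fin (m + n)) Kq)ˣ where
  val := Rhat m n
  inv := Rhat m n - (q - q⁻¹) • 1
  val_inv := by rw [mul_sub, Matrix.mul_smul, mul_one, rhat_mul_self, add_sub_cancel_left]
  inv_val := by rw [sub_mul, Matrix.smul_mul, one_mul, rhat_mul_self, add_sub_cancel_left]

def tauUnit : (Matrix (Fin (m + n) × Fin (m + n)) (Fin (m + n) × Fin (m + n)) Kq)ˣ where
  val := tau m n
  inv := tau m n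
  val_inv := tau_mul_self m n
  inv_val := tau_mul_self m n

variable {m n M}

lemma actOn_eq_onSites (T : Matrix (Fin (m + n) × Fin (m + n)) (Fin (m + n) × Fin (m + n)) Kq)
    (i : Fin (M + 1)) : actOn T i = onSites T i.castSucc i.succ := rfl

lemma Fin.castSucc_ne_succ (i : Fin (M + 1)) : i.castSucc ≠ i.succ :=
  Fin.castSucc_lt_succ.ne

lemma actOn_mul_comm_of_far {i j : Fin (M + 1)} (h : 1 < ((i : ℤ) - j).natAbs)
    (T S : Matrix (Fin (m + n) × Fin (m + n)) (Fin (m + n) × Fin (m + n)) Kq) :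
    actOn T i * actOn S j = actOn S j * actOn T i := by
  have hw : Function.Injective ![i.castSucc, i.succ, j.castSucc, j.succ] := by
    intro u v huv
    fin_cases u <;> fin_cases v <;> simp [Fin.ext_iff] at huv ⊢ <;> omega
  exact onSites_mul_comm ⟨_, hw⟩ T S

lemma actOn_braid_of_adjacent {i j : Fin (M + 1)} (h : (j : ℕ) = i + 1)
    {A B C D E F : Matrix (Fin (m + n) × Fin (m + n)) (Fin (m + n) × Fin (m + n)) Kq}
    (hABC : onFirstTwo A * onLastTwo B * onFirstTwo C = onLastTwo D * onFirstTwo E * onLastTwo F) :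
    actOn A i * actOn B j * actOn C i = actOn D j * actOn E i * actOn F j := by
  have hw : Function.Injective ![i.castSucc, i.succ, j.succ] := by
    intro u v huv
    fin_cases u <;> fin_cases v <;> simp [Fin.ext_iff] at huv ⊢ <;> omega
  have hj : j.castSucc = i.succ := Fin.ext h
  simp only [actOn_eq_onSites, hj]
  exact onSites_braid ⟨_, hw⟩ hABC

variable (m n M)

def vbGenerators : Fin (M + 1) ⊕ Fin (M + 1) →
    (Matrix (Fin (M + 2) → Fin (m + n)) (Fin (M + 2) → Fin (m + n)) Kq)ˣ :=
  Sum.elim (fun i => Units.map (onSitesHom i.castSucc_ne_succ) (rhatUnit m n))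
    (fun i => Units.map (onSitesHom i.castSucc_ne_succ) (tauUnit m n))

lemma vbGenerators_rels : ∀ r ∈ VBRels M, FreeGroup.lift (vbGenerators m n M) r = 1 := by
  rintro r (⟨i, j, hij, rfl | rfl | rfl⟩ | ⟨i, j, hij, rfl | rfl | rfl⟩ | ⟨i, rfl⟩) <;>
    simp only [sg, cg, map_mul, map_inv, FreeGroup.lift_apply_of, vbGenerators, Sum.elim_inl,
      Sum.elim_inr, mul_inv_eq_one] <;>
    try rw [mul_inv_eq_iff_eq_mul]
  all_goals
    ext1
    simp only [Units.val_mul, Units.coe_map, onSitesHom_apply, rhatUnit, tauUnit, Units.val_one,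
      ← actOn_eq_onSites]
  · exact actOn_mul_comm_of_far hij _ _
  · exact actOn_mul_comm_of_far hij _ _
  · exact actOn_mul_comm_of_far hij _ _
  · exact actOn_braid_of_adjacent hij (rhat_braid m n)
  · exact actOn_braid_of_adjacent hij (tau_braid m n)
  · exact actOn_braid_of_adjacent hij (rhat_tau_braid m n)
  · rw [actOn_eq_onSites, onSites_mul i.castSucc_ne_succ, tau_mul_self,
      onSites_one i.castSucc_ne_succ]

end Representation

theorem statement8_general (m n M : ℕ) :
    ∃! φ : VB M →* (Matrix (Fin (M + 2) → Fin (m + n)) (Fin (M + 2) → Fin (m + n)) Kq)ˣ,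
      ∀ i : Fin (M + 1),
        (φ (PresentedGroup.of (Sum.inl i))).val = actOn (Rhat m n) i ∧
        (φ (PresentedGroup.of (Sum.inr i))).val = actOn (tau m n) i := by
  refine ⟨PresentedGroup.toGroup (vbGenerators_rels m n M), fun i => ⟨?_, ?_⟩, fun ψ hψ => ?_⟩
  · rw [PresentedGroup.toGroup.of]; rfl
  · rw [PresentedGroup.toGroup.of]; rfl
  · refine PresentedGroup.ext fun x => ?_
    rw [PresentedGroup.toGroup.of]
    rcases x with i | i
    · exact Units.ext (hψ i).1
    · exact Units.ext (hψ i).2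

/-- the virtual `U_q(gl(m|n))` Reshetikhin–Turaev braid representation exists and
is unique. -/
theorem statement8 (m n M : ℕ) (hmn : 1 ≤ m + n) :
    ∃! φ : VB M →* (Matrix (Fin (M + 2) → Fin (m + n)) (Fin (M + 2) → Fin (m + n)) Kq)ˣ,
      ∀ i : Fin (M + 1),
        (φ (PresentedGroup.of (Sum.inl i))).val = actOn (Rhat m n) i ∧
        (φ (PresentedGroup.of (Sum.inr i))).val = actOn (tau m n) i :=
  statement8_general m n M

end
end

section
/- For every N ≥ 2 and every β ∈ VB_N: tr(ρ^{1|1}_N(β) ∘ μ^{⊗N}) = 0 in ℂ(q). (The virtual U_q(gl(1|1)) invariant of every virtual link vanishes.) -/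
/-!
STATEMENT 18: for every N ≥ 2 (written N = M + 2) and every β ∈ VB_N,
tr(ρ^{1|1}_N(β) ∘ μ^{⊗N}) = 0 in ℂ(q): the virtual U_q(gl(1|1)) invariant of every virtual
link vanishes. The representation ρ^{1|1}_N is characterized by its values on the generators.
-/

noncomputable section

/-- The encoding of the ordered basis `x_1⊗x_1, x_1⊗x_2, x_2⊗x_1, x_2⊗x_2` of `V ⊗ V`. -/
def enc2 (p : Fin 2 × Fin 2) : Fin 4 :=
  ⟨2 * (p.1 : ℕ) + (p.2 : ℕ), by have h1 := p.1.isLt; have h2 := p.2.isLt; omega⟩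

/-- The matrix by which `σ_i` acts on the `i`-th and `(i+1)`-st tensor factors, in the ordered
basis `x_1⊗x_1, x_1⊗x_2, x_2⊗x_1, x_2⊗x_2`. -/
def R11 : Matrix (Fin 2 × Fin 2) (Fin 2 × Fin 2) Kq :=
  fun a b =>
    !![q, 0, 0, 0;
       0, q - q⁻¹, 1, 0;
       0, 1, 0, 0;
       0, 0, 0, -q⁻¹] (enc2 a) (enc2 b)

/-- The matrix by which `χ_i` acts on the `i`-th and `(i+1)`-st tensor factors. -/
def T11 : Matrix (Fin 2 × Fin 2) (Fin 2 × Fin 2) Kq :=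
  fun a b =>
    !![1, 0, 0, 0;
       0, 0, q, 0;
       0, q⁻¹, 0, 0;
       0, 0, 0, -1] (enc2 a) (enc2 b)

/-- The `N`-fold tensor power `D^{⊗N}` of an endomorphism of `V`. -/
def tensorPow {d N : ℕ} (D : Matrix (Fin d) (Fin d) Kq) :
    Matrix (Fin N → Fin d) (Fin N → Fin d) Kq :=
  fun a b => ∏ k, D (a k) (b k)

/-- The map `μ : V → V`, `μ(x_1) = q·x_1`, `μ(x_2) = −q·x_2`. -/
def muMat : Matrix (Fin 2) (Fin 2) Kq :=
  fun a b => if a = b then (if a = 0 then q else -q) else 0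

/-!
The odd lowering generator of `U_q(gl(1|1))` acts on `V^{⊗N}` through its iterated coproduct
`S = ∑ₖ 1^{⊗k} ⊗ c ⊗ (μ⁻¹)^{⊗(N-1-k)}`, where `c x₁ = x₂` and `c x₂ = 0`. A two-site check shows
that `S` commutes with the crossings and the virtual crossings, hence with `ρ(β)`, and `c μ = -μ c`
makes `S` anticommute with `μ^{⊗N}`. With the raising map `c'`, the operator
`h = c' ⊗ μ^{⊗(N-1)}` satisfies `S h + h S = 1`. Cycling the trace,
`tr(ρ(β) μ^{⊗N} h S) = tr(S ρ(β) μ^{⊗N} h) = -tr(ρ(β) μ^{⊗N} S h)`, so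
`tr(ρ(β) μ^{⊗N}) = tr(ρ(β) μ^{⊗N} (S h + h S)) = 0`.
-/

open Matrix
open scoped Kronecker

namespace Matrix

theorem trace_mul_eq_zero_of_commute_of_anticommute {n R : Type*} [Fintype n] [DecidableEq n]
    [CommRing R] {A D S H : Matrix n n R} (hA : Commute S A) (hD : S * D = -(D * S))
    (hSH : S * H + H * S = 1) : trace (A * D) = 0 := by
  have key : trace (A * D * (H * S)) = -trace (A * D * (S * H)) :=
    calc trace (A * D * (H * S)) = trace (S * (A * D * H)) := by
          rw [trace_mul_comm S, Matrix.mul_assoc (A * D)]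
      _ = trace (A * (S * D) * H) := by
          rw [← Matrix.mul_assoc S, ← Matrix.mul_assoc S, hA.eq, Matrix.mul_assoc A S D]
      _ = -trace (A * D * (S * H)) := by
          rw [hD, Matrix.mul_neg, Matrix.neg_mul, trace_neg]
          simp only [Matrix.mul_assoc]
  calc trace (A * D) = trace (A * D * (S * H)) + trace (A * D * (H * S)) := by
        rw [← trace_add, ← Matrix.mul_add, hSH, Matrix.mul_one]
    _ = 0 := by rw [key, add_neg_cancel]

variable {σ ι R : Type*} [Fintype σ] [CommRing R]

def piKron (F : σ → Matrix ι ι R) : Matrix (σ → ι) (σ → ι) R :=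
  fun a b => ∏ k, F k (a k) (b k)

theorem piKron_mul_piKron [DecidableEq σ] [Fintype ι] (F G : σ → Matrix ι ι R) :
    piKron F * piKron G = piKron fun k => F k * G k := by
  ext a b
  simp only [mul_apply, piKron, Finset.prod_univ_sum, Fintype.piFinset_univ,
    Finset.prod_mul_distrib]

theorem piKron_one [DecidableEq ι] : piKron (fun _ => 1 : σ → Matrix ι ι R) = 1 := by
  ext a b
  simp only [piKron, one_apply, Finset.prod_boole, Finset.mem_univ, true_implies, funext_iff]

theorem piKron_apply_eq_mul_prod_erase [DecidableEq σ] (F : σ → Matrix ι ι R) (k : σ)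
    (a b : σ → ι) :
    piKron F a b = F k (a k) (b k) * ∏ m ∈ Finset.univ.erase k, F m (a m) (b m) :=
  (Finset.mul_prod_erase _ _ (Finset.mem_univ k)).symm

theorem prod_erase_apply_congr [DecidableEq σ] {F G : σ → Matrix ι ι R} {k : σ}
    (h : ∀ m ≠ k, F m = G m) (a b : σ → ι) :
    ∏ m ∈ Finset.univ.erase k, F m (a m) (b m) = ∏ m ∈ Finset.univ.erase k, G m (a m) (b m) :=
  Finset.prod_congr rfl fun m hm => by rw [h m (Finset.ne_of_mem_erase hm)]

theorem piKron_eq_smul_of_eqOn_compl [DecidableEq σ] {F G : σ → Matrix ι ι R} (k : σ) (c : R)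
    (hk : F k = c • G k) (h : ∀ m ≠ k, F m = G m) : piKron F = c • piKron G := by
  ext a b
  rw [smul_apply, piKron_apply_eq_mul_prod_erase F k, piKron_apply_eq_mul_prod_erase G k, hk,
    prod_erase_apply_congr h, smul_apply, smul_eq_mul, smul_eq_mul, mul_assoc]

theorem piKron_add_piKron_of_eqOn_compl [DecidableEq σ] {F G H : σ → Matrix ι ι R} (k : σ)
    (hk : F k + G k = H k) (hF : ∀ m ≠ k, F m = H m) (hG : ∀ m ≠ k, G m = H m) :
    piKron F + piKron G = piKron H := by
  ext a b
  rw [add_apply, piKron_apply_eq_mul_prod_erase F k, piKron_apply_eq_mul_prod_erase G k,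
    piKron_apply_eq_mul_prod_erase H k, prod_erase_apply_congr hF, prod_erase_apply_congr hG,
    ← add_mul, ← add_apply, hk]

theorem piKron_mul_piKron_eq_neg [DecidableEq σ] [Fintype ι] {F G : σ → Matrix ι ι R} (k : σ)
    (hk : F k * G k = -(G k * F k)) (h : ∀ m ≠ k, Commute (F m) (G m)) :
    piKron F * piKron G = -(piKron G * piKron F) := by
  rw [piKron_mul_piKron, piKron_mul_piKron, ← neg_one_smul R]
  exact piKron_eq_smul_of_eqOn_compl k (-1) (by rw [hk, neg_one_smul]) fun m hm => (h m hm).eq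

section pairKron

variable [DecidableEq σ] {s t : σ}

def pairKron (s t : σ) (X : Matrix (ι × ι) (ι × ι) R) (F : σ → Matrix ι ι R) :
    Matrix (σ → ι) (σ → ι) R :=
  fun a b => X (a s, a t) (b s, b t) * ∏ k ∈ {s, t}ᶜ, F k (a k) (b k)

theorem pairKron_add_left (X Y : Matrix (ι × ι) (ι × ι) R) (F : σ → Matrix ι ι R) :
    pairKron s t (X + Y) F = pairKron s t X F + pairKron s t Y F := by
  ext a b
  simp only [pairKron, add_apply, add_mul]

theorem pairKron_congr_right (X : Matrix (ι × ι) (ι × ι) R) {F G : σ → Matrix ι ι R}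
    (h : ∀ k ∉ ({s, t} : Finset σ), F k = G k) : pairKron s t X F = pairKron s t X G := by
  ext a b
  simp only [pairKron]
  rw [Finset.prod_congr rfl fun k hk => by rw [h k (Finset.mem_compl.mp hk)]]

theorem piKron_eq_pairKron (hst : s ≠ t) (F : σ → Matrix ι ι R) :
    piKron F = pairKron s t (F s ⊗ₖ F t) F := by
  ext a b
  rw [piKron, pairKron, kronecker_apply, ← Finset.prod_pair hst (f := fun k => F k (a k) (b k)),
    Finset.prod_mul_prod_compl]

theorem sum_eq_sum_update_update {β : Type*} [AddCommMonoid β] [Fintype ι] [DecidableEq ι]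
    (hst : s ≠ t) (a : σ → ι) (f : (σ → ι) → β)
    (hf : ∀ x : σ → ι, ∀ k ∉ ({s, t} : Finset σ), x k ≠ a k → f x = 0) :
    ∑ x, f x = ∑ p : ι × ι, f (Function.update (Function.update a s p.1) t p.2) := by
  refine (Fintype.sum_of_injective _ (fun p r h => ?_) _ f (fun x hx => ?_) fun _ => rfl).symm
  · have hs := congrFun h s
    have ht := congrFun h t
    simp only [Function.update_self, Function.update_of_ne hst] at hs ht
    exact Prod.ext hs ht
  · by_contra hfx
    refine hx ⟨(x s, x t), funext fun k => ?_⟩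
    by_cases hkt : k = t
    · subst hkt; simp
    by_cases hks : k = s
    · subst hks; simp [Function.update_of_ne hst]
    dsimp only
    rw [Function.update_of_ne hkt, Function.update_of_ne hks]
    by_contra hk
    exact hfx (hf x k (by simp [hks, hkt]) (Ne.symm hk))

theorem pairKron_one_mul [Fintype ι] [DecidableEq ι] (hst : s ≠ t)
    (Y X : Matrix (ι × ι) (ι × ι) R) (F : σ → Matrix ι ι R) :
    pairKron s t Y 1 * pairKron s t X F = pairKron s t (Y * X) F := by
  ext a b
  rw [mul_apply, sum_eq_sum_update_update hst a]
  · simp only [pairKron, mul_apply, Finset.sum_mul]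
    refine Fintype.sum_congr _ _ fun p => ?_
    set x := Function.update (Function.update a s p.1) t p.2
    have hs : x s = p.1 := by simp [x, Function.update_of_ne hst]
    have ht : x t = p.2 := by simp [x]
    have hoff : ∀ k ∈ ({s, t} : Finset σ)ᶜ, x k = a k := fun k hk => by
      simp only [Finset.mem_compl, Finset.mem_insert, Finset.mem_singleton, not_or] at hk
      simp [x, Function.update_of_ne hk.2, Function.update_of_ne hk.1]
    have hdelta : ∏ k ∈ ({s, t} : Finset σ)ᶜ, (1 : σ → Matrix ι ι R) k (a k) (x k) = 1 :=
      Finset.prod_eq_one fun k hk => by rw [Pi.one_apply, one_apply, if_pos (hoff k hk).symm]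
    have hF : ∏ k ∈ ({s, t} : Finset σ)ᶜ, F k (x k) (b k)
        = ∏ k ∈ ({s, t} : Finset σ)ᶜ, F k (a k) (b k) :=
      Finset.prod_congr rfl fun k hk => congrArg (F k · (b k)) (hoff k hk)
    have hp : (x s, x t) = p := Prod.ext hs ht
    rw [hdelta, hF, mul_one, hp, mul_assoc]
  · intro x k hk hxk
    refine mul_eq_zero_of_left (mul_eq_zero_of_right _ ?_) _
    exact Finset.prod_eq_zero (Finset.mem_compl.mpr hk) (by simp [Ne.symm hxk])

theorem pairKron_transpose (X : Matrix (ι × ι) (ι × ι) R) (F : σ → Matrix ι ι R) :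
    (pairKron s t X F)ᵀ = pairKron s t Xᵀ fun k => (F k)ᵀ :=
  rfl

theorem pairKron_mul_one [Fintype ι] [DecidableEq ι] (hst : s ≠ t)
    (X Y : Matrix (ι × ι) (ι × ι) R) (F : σ → Matrix ι ι R) :
    pairKron s t X F * pairKron s t Y 1 = pairKron s t (X * Y) F := by
  refine transpose_injective ?_
  rw [transpose_mul, pairKron_transpose, pairKron_transpose, pairKron_transpose]
  simp only [Pi.one_apply, transpose_one]
  exact (pairKron_one_mul hst _ _ _).trans (by rw [transpose_mul])

theorem commute_pairKron [Fintype ι] [DecidableEq ι] (hst : s ≠ t)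
    {X Y : Matrix (ι × ι) (ι × ι) R} (h : Commute X Y) (F : σ → Matrix ι ι R) :
    Commute (pairKron s t X F) (pairKron s t Y 1) := by
  rw [Commute, SemiconjBy, pairKron_mul_one hst, pairKron_one_mul hst, h.eq]

end pairKron

end Matrix

theorem actOn_eq_pairKron {d M : ℕ} (T : Matrix (Fin d × Fin d) (Fin d × Fin d) Kq)
    (i : Fin (M + 1)) : actOn T i = pairKron i.castSucc i.succ T 1 := by
  ext a b
  simp only [actOn, pairKron, Pi.one_apply, one_apply]
  congr 1
  rw [← Finset.prod_mul_prod_compl {i.castSucc, i.succ}, Finset.prod_eq_one, one_mul]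
  · exact Finset.prod_congr rfl fun k hk => by simp_all
  · intro k hk
    simp_all

theorem tensorPow_eq_piKron {d n : ℕ} (D : Matrix (Fin d) (Fin d) Kq) :
    (tensorPow D : Matrix (Fin n → Fin d) (Fin n → Fin d) Kq) = piKron fun _ => D :=
  rfl

namespace Gl11

theorem q_ne_zero : q ≠ 0 := RatFunc.X_ne_zero

def lowering : Matrix (Fin 2) (Fin 2) Kq := !![0, 0; 1, 0]

def raising : Matrix (Fin 2) (Fin 2) Kq := !![0, 1; 0, 0]

def muInv : Matrix (Fin 2) (Fin 2) Kq := !![q⁻¹, 0; 0, -q⁻¹]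

theorem muMat_eq : muMat = !![q, 0; 0, -q] := by
  ext i j
  fin_cases i <;> fin_cases j <;> rfl

theorem muInv_mul_muMat : muInv * muMat = 1 := by
  rw [muMat_eq, muInv, mul_fin_two, one_fin_two]
  simp [inv_mul_cancel₀ q_ne_zero]

theorem commute_muInv_muMat : Commute muInv muMat := by
  rw [Commute, SemiconjBy, muInv_mul_muMat, muMat_eq, muInv, mul_fin_two, one_fin_two]
  simp [mul_inv_cancel₀ q_ne_zero]

theorem lowering_mul_raising_add : lowering * raising + raising * lowering = 1 := by
  rw [lowering, raising, mul_fin_two, mul_fin_two, one_fin_two]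
  simp

theorem lowering_mul_muMat : lowering * muMat = -(muMat * lowering) := by
  rw [muMat_eq, lowering, mul_fin_two, mul_fin_two]
  simp

def coprodLowering : Matrix (Fin 2 × Fin 2) (Fin 2 × Fin 2) Kq :=
  lowering ⊗ₖ muInv + 1 ⊗ₖ lowering

theorem commute_muInv_kronecker_R11 : Commute (muInv ⊗ₖ muInv) R11 := by
  have := q_ne_zero
  ext ⟨a, b⟩ ⟨c, d⟩
  fin_cases a <;> fin_cases b <;> fin_cases c <;> fin_cases d <;>
    simp [mul_apply, Fintype.sum_prod_type, Fin.sum_univ_two, R11, muInv, enc2] <;> field_simp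

theorem commute_coprodLowering_R11 : Commute coprodLowering R11 := by
  have := q_ne_zero
  ext ⟨a, b⟩ ⟨c, d⟩
  fin_cases a <;> fin_cases b <;> fin_cases c <;> fin_cases d <;>
    simp [mul_apply, Fintype.sum_prod_type, Fin.sum_univ_two, R11, muInv, lowering,
      coprodLowering, enc2, one_apply]
  all_goals field_simp
  ring

theorem commute_muInv_kronecker_T11 : Commute (muInv ⊗ₖ muInv) T11 := by
  have := q_ne_zero
  ext ⟨a, b⟩ ⟨c, d⟩
  fin_cases a <;> fin_cases b <;> fin_cases c <;> fin_cases d <;>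
    simp [mul_apply, Fintype.sum_prod_type, Fin.sum_univ_two, T11, muInv, enc2] <;> field_simp

theorem commute_coprodLowering_T11 : Commute coprodLowering T11 := by
  have := q_ne_zero
  ext ⟨a, b⟩ ⟨c, d⟩
  fin_cases a <;> fin_cases b <;> fin_cases c <;> fin_cases d <;>
    simp [mul_apply, Fintype.sum_prod_type, Fin.sum_univ_two, T11, muInv, lowering,
      coprodLowering, enc2, one_apply] <;> field_simp

variable {n : ℕ}

def lowerFactor (k m : Fin n) : Matrix (Fin 2) (Fin 2) Kq :=
  if m < k then 1 else if m = k then lowering else muInv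

theorem lowerFactor_of_lt {k m : Fin n} (h : m < k) : lowerFactor k m = 1 := if_pos h

theorem lowerFactor_self (k : Fin n) : lowerFactor k k = lowering := by
  simp [lowerFactor]

theorem lowerFactor_of_gt {k m : Fin n} (h : k < m) : lowerFactor k m = muInv := by
  simp [lowerFactor, h.not_gt, h.ne']

def loweringOp (n : ℕ) : Matrix (Fin n → Fin 2) (Fin n → Fin 2) Kq :=
  ∑ k, piKron (lowerFactor k)

/-- `raising` sits at the first site, where every other term of `loweringOp` has the factor `1`,
so those terms anticommute with `homotopy` through their `lowering` factor alone. -/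
def homotopy (n : ℕ) [NeZero n] : Matrix (Fin n → Fin 2) (Fin n → Fin 2) Kq :=
  piKron (Function.update (fun _ => muMat) 0 raising)

theorem loweringOp_mul_tensorPow_muMat :
    loweringOp n * tensorPow muMat = -(tensorPow muMat * loweringOp n) := by
  rw [loweringOp, tensorPow_eq_piKron, Finset.sum_mul, Finset.mul_sum, ← Finset.sum_neg_distrib]
  refine Fintype.sum_congr _ _ fun k => piKron_mul_piKron_eq_neg k ?_ fun m hm => ?_
  · rw [lowerFactor_self, lowering_mul_muMat]
  · rcases hm.lt_or_gt with h | h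
    · rw [lowerFactor_of_lt h]
      exact Commute.one_left _
    · rw [lowerFactor_of_gt h]
      exact commute_muInv_muMat

theorem loweringOp_mul_homotopy_add [NeZero n] :
    loweringOp n * homotopy n + homotopy n * loweringOp n = 1 := by
  rw [loweringOp, Finset.sum_mul, Finset.mul_sum, ← Finset.sum_add_distrib,
    Finset.sum_eq_single 0]
  · rw [homotopy, piKron_mul_piKron, piKron_mul_piKron, ← piKron_one]
    refine piKron_add_piKron_of_eqOn_compl 0 ?_ (fun m hm => ?_) fun m hm => ?_
    · simp only [lowerFactor_self, Function.update_self, lowering_mul_raising_add]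
    · rw [lowerFactor_of_gt ((Fin.pos_iff_ne_zero' m).2 hm), Function.update_of_ne hm,
        muInv_mul_muMat]
    · rw [lowerFactor_of_gt ((Fin.pos_iff_ne_zero' m).2 hm), Function.update_of_ne hm,
        ← commute_muInv_muMat.eq, muInv_mul_muMat]
  · intro k _ hk
    rw [homotopy, piKron_mul_piKron_eq_neg k, neg_add_cancel]
    · rw [lowerFactor_self, Function.update_of_ne hk, lowering_mul_muMat]
    · intro m hm
      rcases hm.lt_or_gt with h | h
      · rw [lowerFactor_of_lt h]
        exact Commute.one_left _
      · rw [lowerFactor_of_gt h,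
          Function.update_of_ne (((Fin.pos_iff_ne_zero' k).2 hk).trans h).ne']
        exact commute_muInv_muMat
  · simp

theorem loweringOp_commute_actOn {M : ℕ} (T : Matrix (Fin 2 × Fin 2) (Fin 2 × Fin 2) Kq)
    (i : Fin (M + 1)) (h1 : Commute (muInv ⊗ₖ muInv) T) (h2 : Commute coprodLowering T) :
    Commute (loweringOp (M + 2)) (actOn T i) := by
  set s := i.castSucc
  set t := i.succ
  have hst : s < t := Fin.castSucc_lt_succ
  have hout : ∀ k ∉ ({s, t} : Finset (Fin (M + 2))), k < s ∨ t < k := fun k hk => by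
    simp only [Finset.mem_insert, Finset.mem_singleton, not_or, ← Fin.val_ne_iff] at hk
    simp only [Fin.lt_def, s, t, Fin.val_castSucc, Fin.val_succ] at hk ⊢
    omega
  have hpair : piKron (lowerFactor s) + piKron (lowerFactor t)
      = pairKron s t coprodLowering (lowerFactor s) := by
    rw [piKron_eq_pairKron hst.ne, piKron_eq_pairKron hst.ne,
      pairKron_congr_right _ (F := lowerFactor t) (G := lowerFactor s) fun k hk => ?_,
      ← pairKron_add_left, lowerFactor_self, lowerFactor_of_gt hst, lowerFactor_of_lt hst,
      lowerFactor_self, coprodLowering]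
    rcases hout k hk with h | h
    · rw [lowerFactor_of_lt h, lowerFactor_of_lt (h.trans hst)]
    · rw [lowerFactor_of_gt h, lowerFactor_of_gt (hst.trans h)]
  rw [actOn_eq_pairKron, loweringOp, ← Finset.sum_compl_add_sum {s, t}, Finset.sum_pair hst.ne,
    hpair]
  refine (Commute.sum_left _ _ _ fun k hk => ?_).add_left (commute_pairKron hst.ne h2 _)
  rw [piKron_eq_pairKron hst.ne]
  refine commute_pairKron hst.ne ?_ _
  rcases hout k (Finset.mem_compl.mp hk) with h | h
  · rw [lowerFactor_of_gt h, lowerFactor_of_gt (h.trans hst)]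
    exact h1
  · rw [lowerFactor_of_lt h, lowerFactor_of_lt (hst.trans h), one_kronecker_one]
    exact Commute.one_left _

end Gl11

open Gl11

theorem PresentedGroup.commute_of_forall_commute_of {α M : Type*} {rels : Set (FreeGroup α)}
    [Monoid M] (ρ : PresentedGroup rels →* Mˣ) {S : M}
    (h : ∀ x, Commute S (ρ (PresentedGroup.of x))) (γ : PresentedGroup rels) :
    Commute S (ρ γ) :=
  PresentedGroup.generated_by rels
    { carrier := {γ | Commute S (ρ γ)}
      mul_mem' := fun {a b} ha hb => show Commute S (ρ (a * b)) by
        simpa only [map_mul, Units.val_mul] using ha.mul_right hb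
      one_mem' := by simp
      inv_mem' := fun ha => by simpa using ha.units_inv_right } h γ

theorem statement18 (M : ℕ)
    (ρ : VB M →* (Matrix (Fin (M + 2) → Fin 2) (Fin (M + 2) → Fin 2) Kq)ˣ)
    (hρ : ∀ i : Fin (M + 1),
      (ρ (PresentedGroup.of (Sum.inl i))).val = actOn R11 i ∧
      (ρ (PresentedGroup.of (Sum.inr i))).val = actOn T11 i)
    (β : VB M) :
    Matrix.trace ((ρ β).val * tensorPow muMat) = 0 := by
  have hS : ∀ γ, Commute (loweringOp (M + 2)) (ρ γ).val :=
    PresentedGroup.commute_of_forall_commute_of ρ fun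
      | .inl i => (hρ i).1 ▸
          loweringOp_commute_actOn R11 i commute_muInv_kronecker_R11 commute_coprodLowering_R11
      | .inr i => (hρ i).2 ▸
          loweringOp_commute_actOn T11 i commute_muInv_kronecker_T11 commute_coprodLowering_T11
  exact trace_mul_eq_zero_of_commute_of_anticommute (hS β) loweringOp_mul_tensorPow_muMat
    loweringOp_mul_homotopy_add
end
end
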